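/- A cherry reduction applied to a rooted binary phylogenetic network yields a rooted binary phylogenetic network. In particular, if (c,d) is a reticulated cherry with reticulation leaf c, then the parent of d is a tree vertex. -/

import Mathlib

/-!  Formalisation preliminaries for rooted and unrooted binary phylogenetic
networks, cherry reductions, cherry-reduction sequences and cherry-picking
sequences, following Döcker & Linz. -/

/-- A finite directed graph whose vertices are natural numbers. -/
structure DNet where
  verts : Finset ℕ
  arcs : Finset (ℕ × ℕ)

namespace DNet

/-- in-degree of a vertex -/
def inDeg (N : DNet) (v : ℕ) : ℕ := (N.arcs.filter (fun p => p.2 = v)).card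

/-- out-degree of a vertex -/
def outDeg (N : DNet) (v : ℕ) : ℕ := (N.arcs.filter (fun p => p.1 = v)).card

/-- the arc relation -/
def Arc (N : DNet) (u v : ℕ) : Prop := (u, v) ∈ N.arcs

/-- the digraph has no directed cycle -/
def Acyclic (N : DNet) : Prop := ∀ v, ¬ Relation.TransGen N.Arc v v

/-- root: in-degree 0 and out-degree 2 -/
def IsRoot (N : DNet) (v : ℕ) : Prop := v ∈ N.verts ∧ N.inDeg v = 0 ∧ N.outDeg v = 2

/-- leaf: in-degree 1 and out-degree 0 -/
def IsLeaf (N : DNet) (v : ℕ) : Prop := v ∈ N.verts ∧ N.inDeg v = 1 ∧ N.outDeg v = 0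

/-- tree vertex: in-degree 1 and out-degree 2 -/
def IsTreeVertex (N : DNet) (v : ℕ) : Prop := v ∈ N.verts ∧ N.inDeg v = 1 ∧ N.outDeg v = 2

/-- reticulation: in-degree 2 and out-degree 1 -/
def IsRet (N : DNet) (v : ℕ) : Prop := v ∈ N.verts ∧ N.inDeg v = 2 ∧ N.outDeg v = 1

/-- the network consists of a single vertex -/
def SingleVertex (N : DNet) : Prop := N.verts.card = 1 ∧ N.arcs = ∅

/-- the reticulation number of a rooted network: number of in-degree-2 vertices -/
def retNum (N : DNet) : ℕ := (N.verts.filter (fun v => N.inDeg v = 2)).card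

/-- tree-child: every vertex with a child has a child that is a tree vertex or a leaf -/
def TreeChild (N : DNet) : Prop :=
  ∀ v ∈ N.verts, N.outDeg v ≠ 0 → ∃ c, (v, c) ∈ N.arcs ∧ (N.IsTreeVertex c ∨ N.IsLeaf c)

/-- a stack: two reticulations joined by an arc -/
def HasStack (N : DNet) : Prop := ∃ u v, N.IsRet u ∧ N.IsRet v ∧ (u, v) ∈ N.arcs

/-- a pair of sibling reticulations: two reticulations with a common parent -/
def HasSiblingRets (N : DNet) : Prop :=
  ∃ p u v, u ≠ v ∧ N.IsRet u ∧ N.IsRet v ∧ (p, u) ∈ N.arcs ∧ (p, v) ∈ N.arcs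

/-- stack-free -/
def StackFree (N : DNet) : Prop := ¬ N.HasStack

end DNet

/-- `N` is a rooted binary phylogenetic network with leaf set `X`
(including the degenerate single-vertex network when `|X| = 1`). -/
def IsRootedBinaryNet (N : DNet) (X : Finset ℕ) : Prop :=
  (∃ x, X = {x} ∧ N.verts = {x} ∧ N.arcs = ∅) ∨
  ((∀ p ∈ N.arcs, p.1 ∈ N.verts ∧ p.2 ∈ N.verts) ∧
   (∀ p ∈ N.arcs, p.1 ≠ p.2) ∧
   N.Acyclic ∧
   (∃! ρ, ρ ∈ N.verts ∧ N.inDeg ρ = 0) ∧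
   (∀ v ∈ N.verts, N.IsRoot v ∨ N.IsLeaf v ∨ N.IsTreeVertex v ∨ N.IsRet v) ∧
   (∀ v, N.IsLeaf v ↔ v ∈ X))

/-- `[a,b]` is a cherry of the rooted network `N` (with `a` the leaf to be deleted). -/
def RCherry (N : DNet) (a b : ℕ) : Prop :=
  a ≠ b ∧ N.IsLeaf a ∧ N.IsLeaf b ∧ ∃ p, (p, a) ∈ N.arcs ∧ (p, b) ∈ N.arcs

/-- `(a,b)` is a reticulated cherry of the rooted network `N` with reticulation leaf `a`:
the parent of `a` is a reticulation and receives an arc from the parent of `b`. -/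
def RRetCherry (N : DNet) (a b : ℕ) : Prop :=
  a ≠ b ∧ N.IsLeaf a ∧ N.IsLeaf b ∧
  ∃ pa pb, (pa, a) ∈ N.arcs ∧ (pb, b) ∈ N.arcs ∧ N.IsRet pa ∧ (pb, pa) ∈ N.arcs

/-- `M` is obtained from the rooted network `N` by reducing the cherry `[a,b]`:
delete `a` and suppress (or, if it is the root, delete) the resulting degree-2 vertex. -/
def RReduceCherry (N M : DNet) (a b : ℕ) : Prop :=
  RCherry N a b ∧
  ∃ p, (p, a) ∈ N.arcs ∧ (p, b) ∈ N.arcs ∧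
    ((N.inDeg p = 0 ∧ M.verts = N.verts \ {a, p} ∧ M.arcs = N.arcs \ {(p, a), (p, b)}) ∨
     (∃ g, (g, p) ∈ N.arcs ∧ M.verts = N.verts \ {a, p} ∧
        M.arcs = insert (g, b) (N.arcs \ {(g, p), (p, a), (p, b)})))

/-- `M` is obtained from the rooted network `N` by reducing the reticulated cherry `(a,b)`
with reticulation leaf `a`: delete the reticulation arc `(p_b, p_a)` and suppress the two
resulting degree-2 vertices. -/
def RReduceRetCherry (N M : DNet) (a b : ℕ) : Prop :=
  RRetCherry N a b ∧
  ∃ pa pb qa qb, (pa, a) ∈ N.arcs ∧ (pb, b) ∈ N.arcs ∧ N.IsRet pa ∧ (pb, pa) ∈ N.arcs ∧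
    (qa, pa) ∈ N.arcs ∧ qa ≠ pb ∧ (qb, pb) ∈ N.arcs ∧
    M.verts = N.verts \ {pa, pb} ∧
    M.arcs = insert (qa, a) (insert (qb, b)
      (N.arcs \ {(pb, pa), (pa, a), (qa, pa), (pb, b), (qb, pb)}))

/-- A recorded reduction: either a cherry pair `[x,y]` or a reticulated-cherry pair `(x,y)`
(the deleted leaf, resp. the reticulation leaf, is listed first). -/
inductive Pick where
  | cherry (x y : ℕ)
  | ret (x y : ℕ)
deriving DecidableEq

namespace Pick

/-- first coordinate -/
def fst : Pick → ℕ
  | cherry x _ => x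
  | ret x _ => x

/-- second coordinate -/
def snd : Pick → ℕ
  | cherry _ y => y
  | ret _ y => y

/-- the pair contains the element `z` -/
def Contains (r : Pick) (z : ℕ) : Prop := r.fst = z ∨ r.snd = z

/-- the pair is a reticulated-cherry pair -/
def IsRetPair : Pick → Prop
  | cherry _ _ => False
  | ret _ _ => True

/-- the pair is a cherry pair -/
def IsCherryPair : Pick → Prop
  | cherry _ _ => True
  | ret _ _ => False

end Pick

/-- The step from `N` to `M` is the cherry reduction recorded by the pick `r`
(rooted version). -/
def RStep (N M : DNet) : Pick → Prop
  | .cherry x y => RReduceCherry N M x y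
  | .ret x y => RReduceRetCherry N M x y

/-- `(Ns 0, …, Ns k)` is a cherry-reduction sequence of rooted networks whose associated
cherry-picking sequence is `(rs 0, …, rs (k-1))`. -/
def RCherrySeq (Ns : ℕ → DNet) (rs : ℕ → Pick) (k : ℕ) : Prop :=
  ∀ i < k, RStep (Ns i) (Ns (i + 1)) (rs i)

/-- `(Ns 0, …, Ns k)` is a cherry-reduction sequence of rooted networks. -/
def RReductionSeq (Ns : ℕ → DNet) (k : ℕ) : Prop :=
  ∀ i < k, ∃ r, RStep (Ns i) (Ns (i + 1)) r

/-- `R` is a rooted orchard network: it admits a complete cherry-reduction sequence. -/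
def Orchard (R : DNet) : Prop :=
  ∃ Ns k, Ns 0 = R ∧ RReductionSeq Ns k ∧ (Ns k).SingleVertex

/-- `j = s(i)`: the smallest index `j > i` (within the sequence of length `k`) such that
`rs j` contains the first coordinate of `rs i`. -/
def SuccAt (rs : ℕ → Pick) (k i j : ℕ) : Prop :=
  i < j ∧ j < k ∧ (rs j).Contains (rs i).fst ∧
  ∀ l, i < l → l < j → ¬ (rs l).Contains (rs i).fst

/-- Property (P1): the successor pair of every reticulated-cherry pair, if it exists,
is a cherry pair. -/
def SeqP1 (rs : ℕ → Pick) (k : ℕ) : Prop :=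
  ∀ i j, (rs i).IsRetPair → SuccAt rs k i j → (rs j).IsCherryPair

/-- Property (P2): no element of the sequence is the successor pair of two distinct
reticulated-cherry pairs. -/
def SeqP2 (rs : ℕ → Pick) (k : ℕ) : Prop :=
  ∀ i i' j, i ≠ i' → (rs i).IsRetPair → (rs i').IsRetPair →
    SuccAt rs k i j → SuccAt rs k i' j → False

/-- A tree-child cherry-picking sequence: one satisfying (P1) and (P2). -/
def TreeChildSeq (rs : ℕ → Pick) (k : ℕ) : Prop := SeqP1 rs k ∧ SeqP2 rs k

/-- Property (P3): the first coordinate of each pair does not occur as the second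
coordinate of any later pair. -/
def SeqP3 (rs : ℕ → Pick) (k : ℕ) : Prop :=
  ∀ i j, i < j → j < k → (rs i).fst ≠ (rs j).snd

/-- A finite undirected graph whose vertices are natural numbers. -/
structure UNet where
  verts : Finset ℕ
  edges : Finset (Sym2 ℕ)

namespace UNet

/-- degree of a vertex -/
def deg (U : UNet) (v : ℕ) : ℕ := (U.edges.filter (fun e => v ∈ e)).card

/-- adjacency -/
def Adj (U : UNet) (u v : ℕ) : Prop := u ≠ v ∧ s(u, v) ∈ U.edges

/-- connectedness -/
def Connected (U : UNet) : Prop :=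
  ∀ u ∈ U.verts, ∀ v ∈ U.verts, Relation.ReflTransGen U.Adj u v

/-- leaf: degree-1 vertex -/
def IsLeaf (U : UNet) (v : ℕ) : Prop := v ∈ U.verts ∧ U.deg v = 1

/-- the network consists of a single vertex -/
def SingleVertex (U : UNet) : Prop := U.verts.card = 1 ∧ U.edges = ∅

/-- the reticulation number of an unrooted network: `|E| - (|V| - 1)` -/
def retNum (U : UNet) : ℕ := U.edges.card - (U.verts.card - 1)

end UNet

/-- `U` is an unrooted binary phylogenetic network with leaf set `X`
(including the degenerate single-vertex network when `|X| = 1`). -/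
def IsUnrootedBinaryNet (U : UNet) (X : Finset ℕ) : Prop :=
  (∃ x, X = {x} ∧ U.verts = {x} ∧ U.edges = ∅) ∨
  ((∀ e ∈ U.edges, ¬ e.IsDiag ∧ ∀ v ∈ e, v ∈ U.verts) ∧
   U.Connected ∧
   (∀ v ∈ U.verts, U.deg v = 1 ∨ U.deg v = 3) ∧
   (∀ v, U.IsLeaf v ↔ v ∈ X))

/-- `[a,b]` is a cherry of the unrooted network `U`. -/
def UCherry (U : UNet) (a b : ℕ) : Prop :=
  a ≠ b ∧ U.IsLeaf a ∧ U.IsLeaf b ∧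
  ((∃ p, s(a, p) ∈ U.edges ∧ s(b, p) ∈ U.edges ∧ p ≠ a ∧ p ≠ b) ∨ U.edges = {s(a, b)})

/-- the edge `{u,v}` lies on a cycle of `U` -/
def UOnCycle (U : UNet) (u v : ℕ) : Prop :=
  s(u, v) ∈ U.edges ∧
  Relation.ReflTransGen (fun x y => x ≠ y ∧ s(x, y) ∈ U.edges ∧ s(x, y) ≠ s(u, v)) u v

/-- `(a,b)` is a reticulated cherry of the unrooted network `U` with reticulation
edge `{u,v}`. -/
def URetCherry (U : UNet) (a b : ℕ) : Prop :=
  a ≠ b ∧ U.IsLeaf a ∧ U.IsLeaf b ∧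
  ∃ u v, s(a, u) ∈ U.edges ∧ s(u, v) ∈ U.edges ∧ s(v, b) ∈ U.edges ∧
    u ≠ v ∧ u ≠ a ∧ v ≠ b ∧ UOnCycle U u v

/-- `W` is obtained from `U` by reducing the cherry `[a,b]`: delete `a` and, if `U` has
at least two edges, suppress the resulting degree-2 vertex. -/
def UReduceCherry (U W : UNet) (a b : ℕ) : Prop :=
  UCherry U a b ∧
  ((U.edges = {s(a, b)} ∧ W.verts = U.verts \ {a} ∧ W.edges = ∅) ∨
   (∃ p g, s(a, p) ∈ U.edges ∧ s(b, p) ∈ U.edges ∧ s(p, g) ∈ U.edges ∧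
      p ≠ a ∧ p ≠ b ∧ g ≠ a ∧ g ≠ b ∧ g ≠ p ∧
      W.verts = U.verts \ {a, p} ∧
      W.edges = insert s(b, g) (U.edges \ {s(a, p), s(b, p), s(p, g)})))

/-- `W` is obtained from `U` by reducing the reticulated cherry `(a,b)`: delete the
reticulation edge `{u,v}` and suppress the two resulting degree-2 vertices. -/
def UReduceRetCherry (U W : UNet) (a b : ℕ) : Prop :=
  URetCherry U a b ∧
  ∃ u v ga gb, s(a, u) ∈ U.edges ∧ s(u, v) ∈ U.edges ∧ s(v, b) ∈ U.edges ∧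
    u ≠ v ∧ u ≠ a ∧ v ≠ b ∧ UOnCycle U u v ∧
    s(u, ga) ∈ U.edges ∧ ga ≠ a ∧ ga ≠ v ∧ ga ≠ u ∧
    s(v, gb) ∈ U.edges ∧ gb ≠ b ∧ gb ≠ u ∧ gb ≠ v ∧
    W.verts = U.verts \ {u, v} ∧
    W.edges = insert s(a, ga) (insert s(b, gb)
      (U.edges \ {s(u, v), s(a, u), s(u, ga), s(v, b), s(v, gb)}))

/-- The step from `U` to `W` is the cherry reduction recorded by the pick `r`
(unrooted version). -/
def UStep (U W : UNet) : Pick → Prop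
  | .cherry x y => UReduceCherry U W x y
  | .ret x y => UReduceRetCherry U W x y

/-- `(Us 0, …, Us k)` is a cherry-reduction sequence of unrooted networks whose associated
cherry-picking sequence is `(rs 0, …, rs (k-1))`. -/
def UCherrySeq (Us : ℕ → UNet) (rs : ℕ → Pick) (k : ℕ) : Prop :=
  ∀ i < k, UStep (Us i) (Us (i + 1)) (rs i)

/-- `(Us 0, …, Us k)` is a cherry-reduction sequence of unrooted networks. -/
def UReductionSeq (Us : ℕ → UNet) (k : ℕ) : Prop :=
  ∀ i < k, ∃ r, UStep (Us i) (Us (i + 1)) r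

/-- The rooted network `R` is an orientation of the unrooted network `U`: `U` is obtained
from `R` by forgetting arc directions and suppressing the root. -/
def IsOrientationOf (R : DNet) (U : UNet) : Prop :=
  (R.arcs = ∅ ∧ U.edges = ∅ ∧ U.verts = R.verts) ∨
  (∃ ρ c₁ c₂, ρ ∈ R.verts ∧ R.inDeg ρ = 0 ∧ c₁ ≠ c₂ ∧
    (ρ, c₁) ∈ R.arcs ∧ (ρ, c₂) ∈ R.arcs ∧
    U.verts = R.verts.erase ρ ∧
    U.edges = insert s(c₁, c₂)
      ((R.arcs.filter (fun p => p.1 ≠ ρ)).image (fun p => s(p.1, p.2))))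

/-- `U` is an unrooted tree-child network on `X`: it has a tree-child orientation. -/
def UnrootedTreeChild (U : UNet) (X : Finset ℕ) : Prop :=
  ∃ R : DNet, IsRootedBinaryNet R X ∧ R.TreeChild ∧ IsOrientationOf R U

/-- The pick `r` is one of the picks associated with the recorded reduction `p`:
it must agree with `p` on cherry reductions, and may swap the two coordinates of a
reticulated-cherry reduction. -/
def PickAssoc : Pick → Pick → Prop
  | .cherry x y, r => r = .cherry x y
  | .ret x y, r => r = .ret x y ∨ r = .ret y x

/-- `X`-labelled isomorphism of unrooted networks. -/
def UIso (X : Finset ℕ) (U W : UNet) : Prop :=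
  ∃ f : ℕ → ℕ, Set.BijOn f ↑U.verts ↑W.verts ∧ (∀ x ∈ X, f x = x) ∧
    W.edges = U.edges.image (Sym2.map f)
/-! ### Auxiliary lemmas for Statement 1 -/

lemma card_insert_sdiff_singleton' {α} [DecidableEq α] {s : Finset α} {x y : α}
    (hx : x ∉ s) (hy : y ∈ s) : (insert x (s \ {y})).card = s.card := by
  rw [Finset.card_insert_of_notMem (by simp [hx]), Finset.card_sdiff_of_subset (by simpa using hy)]
  have : 1 ≤ s.card := Finset.card_pos.2 ⟨y, hy⟩
  simp; omega

lemma card_insert2_sdiff_pair' {α} [DecidableEq α] {s : Finset α} {x1 x2 y1 y2 : α}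
    (hx1 : x1 ∉ s) (hx2 : x2 ∉ s) (hx : x1 ≠ x2) (hy1 : y1 ∈ s) (hy2 : y2 ∈ s)
    (hy : y1 ≠ y2) : (insert x1 (insert x2 (s \ {y1, y2}))).card = s.card := by
  rw [Finset.card_insert_of_notMem (by simp [hx1, hx]),
      Finset.card_insert_of_notMem (by simp [hx2]),
      Finset.card_sdiff_of_subset (by simp [Finset.insert_subset_iff, hy1, hy2])]
  have h2 : ({y1, y2} : Finset α).card = 2 := Finset.card_pair hy
  have : 2 ≤ s.card := by
    rw [← h2]; exact Finset.card_le_card (by simp [Finset.insert_subset_iff, hy1, hy2])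
  rw [h2]; omega

lemma filter_in_eq {N : DNet} {v p : ℕ} (h1 : N.inDeg v = 1) (hp : (p, v) ∈ N.arcs) :
    N.arcs.filter (fun q => q.2 = v) = {(p, v)} := by
  refine (Finset.eq_of_subset_of_card_le ?_ ?_).symm
  · simp [Finset.singleton_subset_iff, hp]
  · simpa [DNet.inDeg] using h1.le

lemma uniq_in {N : DNet} {v p : ℕ} (h1 : N.inDeg v = 1) (hp : (p, v) ∈ N.arcs) :
    ∀ u, (u, v) ∈ N.arcs → u = p := by
  intro u hu
  have : (u, v) ∈ N.arcs.filter (fun q => q.2 = v) := by simp [hu]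
  rw [filter_in_eq h1 hp] at this
  simpa using this

lemma filter_out_eq {N : DNet} {v c : ℕ} (h1 : N.outDeg v = 1) (hc : (v, c) ∈ N.arcs) :
    N.arcs.filter (fun q => q.1 = v) = {(v, c)} := by
  refine (Finset.eq_of_subset_of_card_le ?_ ?_).symm
  · simp [Finset.singleton_subset_iff, hc]
  · simpa [DNet.outDeg] using h1.le

lemma uniq_out {N : DNet} {v c : ℕ} (h1 : N.outDeg v = 1) (hc : (v, c) ∈ N.arcs) :
    ∀ u, (v, u) ∈ N.arcs → u = c := by
  intro u hu
  have : (v, u) ∈ N.arcs.filter (fun q => q.1 = v) := by simp [hu]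
  rw [filter_out_eq h1 hc] at this
  simpa using this

lemma two_out {N : DNet} {p a b : ℕ} (h : N.outDeg p = 2) (hab : a ≠ b)
    (ha : (p, a) ∈ N.arcs) (hb : (p, b) ∈ N.arcs) :
    ∀ c, (p, c) ∈ N.arcs → c = a ∨ c = b := by
  have hsub : ({(p, a), (p, b)} : Finset (ℕ × ℕ)) ⊆ N.arcs.filter (fun q => q.1 = p) := by
    simp [Finset.insert_subset_iff, ha, hb]
  have hcard : (N.arcs.filter (fun q => q.1 = p)).card ≤
      ({(p, a), (p, b)} : Finset (ℕ × ℕ)).card := by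
    rw [Finset.card_pair (by simp [hab])]; exact h.le
  have heq := Finset.eq_of_subset_of_card_le hsub hcard
  intro c hc
  have : (p, c) ∈ ({(p, a), (p, b)} : Finset (ℕ × ℕ)) := by rw [heq]; simp [hc]
  simpa using this

lemma two_in {N : DNet} {v x y : ℕ} (h : N.inDeg v = 2) (hxy : x ≠ y)
    (hx : (x, v) ∈ N.arcs) (hy : (y, v) ∈ N.arcs) :
    ∀ u, (u, v) ∈ N.arcs → u = x ∨ u = y := by
  have hsub : ({(x, v), (y, v)} : Finset (ℕ × ℕ)) ⊆ N.arcs.filter (fun q => q.2 = v) := by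
    simp [Finset.insert_subset_iff, hx, hy]
  have hcard : (N.arcs.filter (fun q => q.2 = v)).card ≤
      ({(x, v), (y, v)} : Finset (ℕ × ℕ)).card := by
    rw [Finset.card_pair (by simp [hxy])]; exact h.le
  have heq := Finset.eq_of_subset_of_card_le hsub hcard
  intro u hu
  have : (u, v) ∈ ({(x, v), (y, v)} : Finset (ℕ × ℕ)) := by rw [heq]; simp [hu]
  simpa using this

lemma outDeg_pos {N : DNet} {u v : ℕ} (h : (u, v) ∈ N.arcs) : 0 < N.outDeg u :=
  Finset.card_pos.2 ⟨(u, v), by simp [h]⟩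

lemma inDeg_pos {N : DNet} {u v : ℕ} (h : (u, v) ∈ N.arcs) : 0 < N.inDeg v :=
  Finset.card_pos.2 ⟨(u, v), by simp [h]⟩

lemma acyclic_of_sub {N M : DNet} (h : ∀ u v, M.Arc u v → Relation.TransGen N.Arc u v)
    (hN : N.Acyclic) : M.Acyclic := by
  intro v hv
  exact hN v (Relation.transGen_idem (r := N.Arc) ▸ Relation.TransGen.mono h v v hv)

lemma cycle_of_pred (N : DNet) (S : Finset ℕ) (hne : S.Nonempty)
    (hS : ∀ v ∈ S, ∃ u ∈ S, (u, v) ∈ N.arcs) : ∃ v, Relation.TransGen N.Arc v v := by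
  classical
  obtain ⟨v0, hv0⟩ := hne
  choose f hf1 hf2 using hS
  set g : ℕ → ℕ := fun v => if h : v ∈ S then f v h else v0 with hg
  have hgmem : ∀ v ∈ S, g v ∈ S := by intro v hv; simp [hg, hv, hf1]
  have hgarc : ∀ v ∈ S, (g v, v) ∈ N.arcs := by intro v hv; simp [hg, hv, hf2]
  have hiter : ∀ n, g^[n] v0 ∈ S := by
    intro n; induction n with
    | zero => simpa using hv0
    | succ n ih => rw [Function.iterate_succ_apply']; exact hgmem _ ih
  have htg : ∀ k, ∀ w ∈ S, Relation.TransGen N.Arc (g^[k + 1] w) w := by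
    intro k
    induction k with
    | zero => intro w hw; exact Relation.TransGen.single (hgarc w hw)
    | succ k ih =>
        intro w hw
        have h1 : Relation.TransGen N.Arc (g^[k + 1] (g w)) (g w) := ih _ (hgmem w hw)
        have h2 : g^[k + 1 + 1] w = g^[k + 1] (g w) := Function.iterate_succ_apply g (k + 1) w
        rw [h2]
        exact h1.tail (hgarc w hw)
  have hpigeon : ∃ m ∈ Finset.range (S.card + 1), ∃ n ∈ Finset.range (S.card + 1),
      m ≠ n ∧ g^[m] v0 = g^[n] v0 := by
    apply Finset.exists_ne_map_eq_of_card_lt_of_maps_to (t := S) (by simp)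
    intro n _; exact hiter n
  obtain ⟨m, -, n, -, hmn, heq⟩ := hpigeon
  rcases lt_or_gt_of_ne hmn with hlt | hlt
  · refine ⟨g^[n] v0, ?_⟩
    have h3 : Relation.TransGen N.Arc (g^[(n - m - 1) + 1] (g^[m] v0)) (g^[m] v0) :=
      htg _ _ (hiter m)
    rw [← Function.iterate_add_apply] at h3
    have hn : (n - m - 1) + 1 + m = n := by omega
    rw [hn] at h3
    rw [heq] at h3; exact h3
  · refine ⟨g^[m] v0, ?_⟩
    have h3 : Relation.TransGen N.Arc (g^[(m - n - 1) + 1] (g^[n] v0)) (g^[n] v0) :=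
      htg _ _ (hiter n)
    rw [← Function.iterate_add_apply] at h3
    have hn : (m - n - 1) + 1 + n = m := by omega
    rw [hn] at h3
    rw [← heq] at h3; exact h3
lemma filter_untouched (f : ℕ × ℕ → ℕ) {A rem : Finset (ℕ × ℕ)} {e1 e2 : ℕ × ℕ} {v : ℕ}
    (h1 : f e1 ≠ v) (h2 : f e2 ≠ v) (hrem : ∀ r ∈ rem, f r ≠ v) :
    (insert e1 (insert e2 (A \ rem))).filter (fun q => f q = v) =
      A.filter (fun q => f q = v) := by
  ext q
  simp only [Finset.mem_filter, Finset.mem_insert, Finset.mem_sdiff]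
  constructor
  · rintro ⟨rfl | rfl | ⟨hm, -⟩, hv⟩
    · exact absurd hv h1
    · exact absurd hv h2
    · exact ⟨hm, hv⟩
  · rintro ⟨hm, hv⟩
    exact ⟨Or.inr (Or.inr ⟨hm, fun hr => hrem q hr hv⟩), hv⟩

lemma filter_one_swap (f : ℕ × ℕ → ℕ) {A rem : Finset (ℕ × ℕ)} {e1 e2 r : ℕ × ℕ} {v : ℕ}
    (h1 : f e1 = v) (h2 : f e2 ≠ v) (hA : A.filter (fun q => f q = v) = {r}) (hr : r ∈ rem) :
    (insert e1 (insert e2 (A \ rem))).filter (fun q => f q = v) = {e1} := by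
  ext q
  simp only [Finset.mem_filter, Finset.mem_insert, Finset.mem_sdiff, Finset.mem_singleton]
  constructor
  · rintro ⟨rfl | rfl | ⟨hm, hnr⟩, hv⟩
    · rfl
    · exact absurd hv h2
    · exfalso
      have hq : q ∈ A.filter (fun q => f q = v) := Finset.mem_filter.2 ⟨hm, hv⟩
      rw [hA, Finset.mem_singleton] at hq
      exact hnr (hq ▸ hr)
  · rintro rfl
    exact ⟨Or.inl rfl, h1⟩

lemma filter_out_swap (f : ℕ × ℕ → ℕ) {A rem : Finset (ℕ × ℕ)} {e1 e2 r : ℕ × ℕ} {v : ℕ}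
    (h1 : f e1 = v) (h2 : f e2 ≠ v) (hr : r ∈ rem)
    (hrem : ∀ s ∈ rem, s ≠ r → f s ≠ v) :
    (insert e1 (insert e2 (A \ rem))).filter (fun q => f q = v) =
      insert e1 (A.filter (fun q => f q = v) \ {r}) := by
  ext q
  simp only [Finset.mem_filter, Finset.mem_insert, Finset.mem_sdiff, Finset.mem_singleton]
  constructor
  · rintro ⟨rfl | rfl | ⟨hm, hnr⟩, hv⟩
    · exact Or.inl rfl
    · exact absurd hv h2
    · refine Or.inr ⟨⟨hm, hv⟩, ?_⟩
      rintro rfl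
      exact hnr hr
  · rintro (rfl | ⟨⟨hm, hv⟩, hne⟩)
    · exact ⟨Or.inl rfl, h1⟩
    · exact ⟨Or.inr (Or.inr ⟨hm, fun hq => hrem q hq hne hv⟩), hv⟩

lemma filter_two_swap (f : ℕ × ℕ → ℕ) {A rem : Finset (ℕ × ℕ)} {e1 e2 r1 r2 : ℕ × ℕ} {v : ℕ}
    (h1 : f e1 = v) (h2 : f e2 = v) (hr1 : r1 ∈ rem) (hr2 : r2 ∈ rem)
    (hrem : ∀ s ∈ rem, s ≠ r1 → s ≠ r2 → f s ≠ v) :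
    (insert e1 (insert e2 (A \ rem))).filter (fun q => f q = v) =
      insert e1 (insert e2 (A.filter (fun q => f q = v) \ {r1, r2})) := by
  ext q
  simp only [Finset.mem_filter, Finset.mem_insert, Finset.mem_sdiff, Finset.mem_singleton]
  constructor
  · rintro ⟨rfl | rfl | ⟨hm, hnr⟩, hv⟩
    · exact Or.inl rfl
    · exact Or.inr (Or.inl rfl)
    · refine Or.inr (Or.inr ⟨⟨hm, hv⟩, ?_⟩)
      rintro (rfl | rfl)
      exacts [hnr hr1, hnr hr2]
  · rintro (rfl | rfl | ⟨⟨hm, hv⟩, hne⟩)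
    · exact ⟨Or.inl rfl, h1⟩
    · exact ⟨Or.inr (Or.inl rfl), h2⟩
    · refine ⟨Or.inr (Or.inr ⟨hm, fun hq => hrem q hq (fun h => hne (Or.inl h))
        (fun h => hne (Or.inr h)) hv⟩), hv⟩
lemma cherry_closed (R M : DNet) (X : Finset ℕ) (a b : ℕ)
    (hR : IsRootedBinaryNet R X) (h : RReduceCherry R M a b) :
    IsRootedBinaryNet M (X.erase a) := by
  obtain ⟨⟨hab, hLa, hLb, -⟩, p, hpa, hpb, hcase⟩ := h
  rcases hR with ⟨x, hX, hV, hA⟩ | ⟨hEnds, hLoop, hAcy, hRootU, hClass, hLeafX⟩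
  · rw [hA] at hpa; simp at hpa
  have hpv : p ∈ R.verts := (hEnds _ hpa).1
  have hav : a ∈ R.verts := hLa.1
  have hbv : b ∈ R.verts := hLb.1
  have hina1 : R.inDeg a = 1 := hLa.2.1
  have houta : R.outDeg a = 0 := hLa.2.2
  have hinb1 : R.inDeg b = 1 := hLb.2.1
  have houtb : R.outDeg b = 0 := hLb.2.2
  have hpa' : p ≠ a := hLoop _ hpa
  have hpb' : p ≠ b := hLoop _ hpb
  have hout2 : R.outDeg p = 2 := by
    have h2 : 2 ≤ R.outDeg p := by
      have hsub : ({(p, a), (p, b)} : Finset (ℕ × ℕ)) ⊆ R.arcs.filter (fun q => q.1 = p) := by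
        simp [Finset.insert_subset_iff, hpa, hpb]
      have hc := Finset.card_le_card hsub
      rwa [Finset.card_pair (by simp [hab])] at hc
    rcases hClass p hpv with ⟨-, -, h⟩ | ⟨-, -, h⟩ | ⟨-, -, h⟩ | ⟨-, -, h⟩ <;> omega
  have hpout : ∀ c, (p, c) ∈ R.arcs → c = a ∨ c = b := two_out hout2 hab hpa hpb
  have huina : ∀ u, (u, a) ∈ R.arcs → u = p := uniq_in hina1 hpa
  have huinb : ∀ u, (u, b) ∈ R.arcs → u = p := uniq_in hinb1 hpb
  obtain ⟨ρ, ⟨hρv, hρ0⟩, hρu⟩ := hRootU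
  have hrootid : ∀ v ∈ R.verts, R.inDeg v = 0 → v = ρ := fun v hv h0 => hρu v ⟨hv, h0⟩
  rcases hcase with ⟨hp0, hMV, hMA⟩ | ⟨g, hgp, hMV, hMA⟩
  · -- p is the root: result is the single-vertex network on b
    have hVsub : R.verts ⊆ {p, a, b} := by
      by_contra hcon
      obtain ⟨v0, hv01, hv02⟩ := Finset.not_subset.1 hcon
      have hS : ∀ v ∈ R.verts \ {p, a, b}, ∃ u ∈ R.verts \ {p, a, b}, (u, v) ∈ R.arcs := by
        intro v hv
        rw [Finset.mem_sdiff] at hv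
        obtain ⟨hv1, hv2⟩ := hv
        simp only [Finset.mem_insert, Finset.mem_singleton] at hv2
        have h0 : R.inDeg v ≠ 0 := by
          intro h0
          have h1 := hrootid v hv1 h0
          have h2 := hrootid p hpv hp0
          omega
        obtain ⟨⟨u, w⟩, hu⟩ := Finset.card_pos.1 (Nat.pos_of_ne_zero h0)
        simp only [Finset.mem_filter] at hu
        obtain ⟨huarc, hw⟩ := hu
        have hwv : w = v := hw
        subst hwv
        refine ⟨u, ?_, huarc⟩
        rw [Finset.mem_sdiff]
        refine ⟨(hEnds _ huarc).1, ?_⟩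
        simp only [Finset.mem_insert, Finset.mem_singleton]
        have hua : u ≠ a := by rintro rfl; have := outDeg_pos huarc; omega
        have hub : u ≠ b := by rintro rfl; have := outDeg_pos huarc; omega
        have hup : u ≠ p := by rintro rfl; rcases hpout w huarc with rfl | rfl <;> omega
        omega
      have hne : (R.verts \ {p, a, b}).Nonempty := ⟨v0, Finset.mem_sdiff.2 ⟨hv01, hv02⟩⟩
      obtain ⟨v, hv⟩ := cycle_of_pred R _ hne hS
      exact hAcy v hv
    left
    refine ⟨b, ?_, ?_, ?_⟩
    · have hXab : X = {a, b} := by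
        apply Finset.Subset.antisymm
        · intro v hv
          have hlv := (hLeafX v).2 hv
          have hv1 := hVsub hlv.1
          have hv2 := hlv.2.2
          simp only [Finset.mem_insert, Finset.mem_singleton] at hv1 ⊢
          rcases hv1 with rfl | h3 | h3 <;> omega
        · intro v hv
          simp only [Finset.mem_insert, Finset.mem_singleton] at hv
          rcases hv with rfl | rfl
          · exact (hLeafX _).1 hLa
          · exact (hLeafX _).1 hLb
      rw [hXab]
      exact Finset.erase_insert (by simp [hab])
    · rw [hMV]
      apply Finset.Subset.antisymm
      · intro v hv
        rw [Finset.mem_sdiff] at hv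
        obtain ⟨h1, h2⟩ := hv
        have h3 := hVsub h1
        simp only [Finset.mem_insert, Finset.mem_singleton] at h2 h3 ⊢
        omega
      · intro v hv
        simp only [Finset.mem_singleton] at hv
        subst hv
        rw [Finset.mem_sdiff]
        refine ⟨hbv, ?_⟩
        simp only [Finset.mem_insert, Finset.mem_singleton]
        omega
    · rw [hMA, Finset.sdiff_eq_empty_iff_subset]
      rintro ⟨x, y⟩ hq
      have hx := hVsub (hEnds _ hq).1
      simp only [Finset.mem_insert, Finset.mem_singleton, Prod.mk.injEq] at hx ⊢
      have hxa : x ≠ a := by rintro rfl; have := outDeg_pos hq; omega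
      have hxb : x ≠ b := by rintro rfl; have := outDeg_pos hq; omega
      have hxp : x = p := by omega
      subst hxp
      rcases hpout y hq with rfl | rfl <;> omega
  · -- p is a tree vertex with parent g: suppress p
    have hgp' : g ≠ p := hLoop _ hgp
    have hinp1 : R.inDeg p = 1 := by
      have h1 := inDeg_pos hgp
      rcases hClass p hpv with ⟨-, h2, h3⟩ | ⟨-, h2, h3⟩ | ⟨-, h2, h3⟩ | ⟨-, h2, h3⟩ <;> omega
    have huinp : ∀ u, (u, p) ∈ R.arcs → u = g := uniq_in hinp1 hgp
    have hgv : g ∈ R.verts := (hEnds _ hgp).1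
    have hga : g ≠ a := by rintro rfl; have := outDeg_pos hgp; omega
    have hgb : g ≠ b := by rintro rfl; have := outDeg_pos hgp; omega
    have hgbn : (g, b) ∉ R.arcs := fun hx => hgp' (huinb g hx)
    -- degree preservation
    have hIn : ∀ v, v ≠ a → v ≠ p → M.inDeg v = R.inDeg v := by
      intro v hva hvp
      show (M.arcs.filter (fun q => q.2 = v)).card = (R.arcs.filter (fun q => q.2 = v)).card
      by_cases hvb : v = b
      · rw [hvb, filter_in_eq hinb1 hpb]
        have hkey : M.arcs.filter (fun q => q.2 = b) = {(g, b)} := by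
          rw [hMA]; ext ⟨x, y⟩
          simp only [Finset.mem_filter, Finset.mem_insert, Finset.mem_sdiff,
            Finset.mem_singleton, Prod.mk.injEq]
          constructor
          · rintro ⟨h1 | ⟨h1, h2⟩, h3⟩
            · omega
            · subst h3
              have hx := huinb x h1
              exfalso; omega
          · intro h1
            exact ⟨Or.inl ⟨h1.1, h1.2⟩, h1.2⟩
        rw [hkey]
        simp
      · have hkey : M.arcs.filter (fun q => q.2 = v) = R.arcs.filter (fun q => q.2 = v) := by
          rw [hMA]; ext ⟨x, y⟩
          simp only [Finset.mem_filter, Finset.mem_insert, Finset.mem_sdiff,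
            Finset.mem_singleton, Prod.mk.injEq]
          constructor
          · rintro ⟨h1 | ⟨h1, h2⟩, h3⟩
            · exfalso; omega
            · exact ⟨h1, h3⟩
          · rintro ⟨h1, h2⟩
            refine ⟨Or.inr ⟨h1, ?_⟩, h2⟩
            omega
        rw [hkey]
    have hOut : ∀ v, v ≠ a → v ≠ p → M.outDeg v = R.outDeg v := by
      intro v hva hvp
      show (M.arcs.filter (fun q => q.1 = v)).card = (R.arcs.filter (fun q => q.1 = v)).card
      by_cases hvg : v = g
      · rw [hvg]
        have hkey : M.arcs.filter (fun q => q.1 = g) =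
            insert (g, b) (R.arcs.filter (fun q => q.1 = g) \ {(g, p)}) := by
          rw [hMA]; ext ⟨x, y⟩
          simp only [Finset.mem_filter, Finset.mem_insert, Finset.mem_sdiff,
            Finset.mem_singleton, Prod.mk.injEq]
          constructor
          · rintro ⟨h1 | ⟨h1, h2⟩, h3⟩
            · exact Or.inl (by omega)
            · exact Or.inr ⟨⟨h1, h3⟩, by omega⟩
          · rintro (h1 | ⟨⟨h1, h2⟩, h3⟩)
            · exact ⟨Or.inl (by omega), by omega⟩
            · refine ⟨Or.inr ⟨h1, ?_⟩, h2⟩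
              omega
        rw [hkey, card_insert_sdiff_singleton' (by simp [hgbn]) (by simp [hgp])]
      · have hkey : M.arcs.filter (fun q => q.1 = v) = R.arcs.filter (fun q => q.1 = v) := by
          rw [hMA]; ext ⟨x, y⟩
          simp only [Finset.mem_filter, Finset.mem_insert, Finset.mem_sdiff,
            Finset.mem_singleton, Prod.mk.injEq]
          constructor
          · rintro ⟨h1 | ⟨h1, h2⟩, h3⟩
            · exfalso; omega
            · exact ⟨h1, h3⟩
          · rintro ⟨h1, h2⟩
            refine ⟨Or.inr ⟨h1, ?_⟩, h2⟩
            omega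
        rw [hkey]
    have hρa : ρ ≠ a := by rintro rfl; omega
    have hρp : ρ ≠ p := by rintro rfl; omega
    have hMmem : ∀ v, v ∈ M.verts ↔ v ∈ R.verts ∧ v ≠ a ∧ v ≠ p := by
      intro v
      rw [hMV, Finset.mem_sdiff]
      simp only [Finset.mem_insert, Finset.mem_singleton]
      tauto
    right
    refine ⟨?_, ?_, ?_, ?_, ?_, ?_⟩
    · -- endpoints
      rintro ⟨x, y⟩ hq
      rw [hMA] at hq
      simp only [Finset.mem_insert, Finset.mem_sdiff, Finset.mem_singleton,
        Prod.mk.injEq] at hq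
      rcases hq with ⟨rfl, rfl⟩ | ⟨h1, h2⟩
      · exact ⟨(hMmem _).2 ⟨hgv, hga, hgp'⟩, (hMmem _).2 ⟨hbv, by omega, by omega⟩⟩
      · have hxa : x ≠ a := by rintro rfl; have := outDeg_pos h1; omega
        have hxp : x ≠ p := by
          rintro rfl
          rcases hpout y h1 with rfl | rfl <;> omega
        have hya : y ≠ a := by
          rintro rfl
          have := huina x h1
          omega
        have hyp : y ≠ p := by
          rintro rfl
          have := huinp x h1
          omega
        exact ⟨(hMmem x).2 ⟨(hEnds _ h1).1, hxa, hxp⟩, (hMmem y).2 ⟨(hEnds _ h1).2, hya, hyp⟩⟩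
    · -- no loops
      rintro ⟨x, y⟩ hq
      rw [hMA] at hq
      simp only [Finset.mem_insert, Finset.mem_sdiff, Finset.mem_singleton,
        Prod.mk.injEq] at hq
      rcases hq with ⟨rfl, rfl⟩ | ⟨h1, -⟩
      · exact hgb
      · exact hLoop _ h1
    · -- acyclic
      refine acyclic_of_sub ?_ hAcy
      rintro u v hq
      rw [DNet.Arc, hMA] at hq
      simp only [Finset.mem_insert, Finset.mem_sdiff, Finset.mem_singleton,
        Prod.mk.injEq] at hq
      rcases hq with ⟨rfl, rfl⟩ | ⟨h1, -⟩
      · exact Relation.TransGen.head hgp (Relation.TransGen.single hpb)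
      · exact Relation.TransGen.single h1
    · -- unique root
      refine ⟨ρ, ⟨(hMmem ρ).2 ⟨hρv, hρa, hρp⟩, by rw [hIn ρ hρa hρp]; exact hρ0⟩, ?_⟩
      rintro v ⟨hv1, hv2⟩
      obtain ⟨hv1, hva, hvp⟩ := (hMmem v).1 hv1
      rw [hIn v hva hvp] at hv2
      exact hrootid v hv1 hv2
    · -- vertex classification
      intro v hv
      obtain ⟨hv1, hva, hvp⟩ := (hMmem v).1 hv
      rcases hClass v hv1 with ⟨-, h1, h2⟩ | ⟨-, h1, h2⟩ | ⟨-, h1, h2⟩ | ⟨-, h1, h2⟩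
      · exact Or.inl ⟨hv, by rw [hIn v hva hvp]; exact h1, by rw [hOut v hva hvp]; exact h2⟩
      · exact Or.inr (Or.inl ⟨hv, by rw [hIn v hva hvp]; exact h1,
          by rw [hOut v hva hvp]; exact h2⟩)
      · exact Or.inr (Or.inr (Or.inl ⟨hv, by rw [hIn v hva hvp]; exact h1,
          by rw [hOut v hva hvp]; exact h2⟩))
      · exact Or.inr (Or.inr (Or.inr ⟨hv, by rw [hIn v hva hvp]; exact h1,
          by rw [hOut v hva hvp]; exact h2⟩))
    · -- leaves
      intro v
      constructor
      · rintro ⟨hv1, h1, h2⟩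
        obtain ⟨hv1, hva, hvp⟩ := (hMmem v).1 hv1
        rw [hIn v hva hvp] at h1
        rw [hOut v hva hvp] at h2
        exact Finset.mem_erase.2 ⟨hva, (hLeafX v).1 ⟨hv1, h1, h2⟩⟩
      · intro hv
        rw [Finset.mem_erase] at hv
        obtain ⟨hva, hvX⟩ := hv
        obtain ⟨hv1, h1, h2⟩ := (hLeafX v).2 hvX
        have hvp : v ≠ p := by rintro rfl; omega
        exact ⟨(hMmem v).2 ⟨hv1, hva, hvp⟩, by rw [hIn v hva hvp]; exact h1,
          by rw [hOut v hva hvp]; exact h2⟩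
set_option maxHeartbeats 400000 in
lemma ret_closed (R M : DNet) (X : Finset ℕ) (a b : ℕ)
    (hR : IsRootedBinaryNet R X) (h : RReduceRetCherry R M a b) :
    IsRootedBinaryNet M X ∧ ∀ pd, (pd, b) ∈ R.arcs → R.IsTreeVertex pd := by
  obtain ⟨⟨hab, hLa, hLb, -⟩, pa, pb, qa, qb, hpaa, hpbb, hret, hpbpa, hqapa, hqanepb,
    hqbpb, hMV, hMA⟩ := h
  rcases hR with ⟨x, hX, hV, hA⟩ | ⟨hEnds, hLoop, hAcy, hRootU, hClass, hLeafX⟩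
  · rw [hA] at hpaa; simp at hpaa
  have hina1 : R.inDeg a = 1 := hLa.2.1
  have houta : R.outDeg a = 0 := hLa.2.2
  have hinb1 : R.inDeg b = 1 := hLb.2.1
  have houtb : R.outDeg b = 0 := hLb.2.2
  have hav : a ∈ R.verts := hLa.1
  have hbv : b ∈ R.verts := hLb.1
  have hpav : pa ∈ R.verts := hret.1
  have hinpa2 : R.inDeg pa = 2 := hret.2.1
  have houtpa1 : R.outDeg pa = 1 := hret.2.2
  have hpbv : pb ∈ R.verts := (hEnds _ hpbb).1
  have hqav : qa ∈ R.verts := (hEnds _ hqapa).1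
  have hqbv : qb ∈ R.verts := (hEnds _ hqbpb).1
  have hpaa' : pa ≠ a := hLoop _ hpaa
  have hpbb' : pb ≠ b := hLoop _ hpbb
  have hpbpa' : pb ≠ pa := hLoop _ hpbpa
  have hqapa' : qa ≠ pa := hLoop _ hqapa
  have hqbpb' : qb ≠ pb := hLoop _ hqbpb
  have houtpa : ∀ u, (pa, u) ∈ R.arcs → u = a := uniq_out houtpa1 hpaa
  have hinpa : ∀ u, (u, pa) ∈ R.arcs → u = pb ∨ u = qa :=
    two_in hinpa2 (Ne.symm hqanepb) hpbpa hqapa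
  have hina : ∀ u, (u, a) ∈ R.arcs → u = pa := uniq_in hina1 hpaa
  have hinb : ∀ u, (u, b) ∈ R.arcs → u = pb := uniq_in hinb1 hpbb
  have hbpa : b ≠ pa := by rintro rfl; omega
  have hTpb : R.IsTreeVertex pb := by
    have hge : 2 ≤ R.outDeg pb := by
      have hsub : ({(pb, b), (pb, pa)} : Finset (ℕ × ℕ)) ⊆
          R.arcs.filter (fun q => q.1 = pb) := by
        simp [Finset.insert_subset_iff, hpbb, hpbpa]
      have hc := Finset.card_le_card hsub
      rwa [Finset.card_pair (by simp [hbpa])] at hc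
    have hpos := inDeg_pos hqbpb
    rcases hClass pb hpbv with ⟨-, h1, h2⟩ | ⟨-, h1, h2⟩ | h1 | ⟨-, h1, h2⟩
    · exact absurd h1 (by omega)
    · exact absurd h2 (by omega)
    · exact h1
    · exact absurd h2 (by omega)
  have hinpb1 : R.inDeg pb = 1 := hTpb.2.1
  have houtpb2 : R.outDeg pb = 2 := hTpb.2.2
  have houtpb : ∀ u, (pb, u) ∈ R.arcs → u = b ∨ u = pa := two_out houtpb2 hbpa hpbb hpbpa
  have hinpb : ∀ u, (u, pb) ∈ R.arcs → u = qb := uniq_in hinpb1 hqbpb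
  have hapb : a ≠ pb := by rintro rfl; have := outDeg_pos hpbb; omega
  have hqaa : qa ≠ a := by rintro rfl; have := outDeg_pos hqapa; omega
  have hqab : qa ≠ b := by rintro rfl; have := outDeg_pos hqapa; omega
  have hqba : qb ≠ a := by rintro rfl; have := outDeg_pos hqbpb; omega
  have hqbb : qb ≠ b := by rintro rfl; have := outDeg_pos hqbpb; omega
  have hqbpa : qb ≠ pa := by
    rintro rfl
    have h1 := houtpa pb hqbpb
    have h2 := outDeg_pos hpbb
    rw [h1] at h2
    omega
  have hqaan : (qa, a) ∉ R.arcs := fun hx => hqapa' (hina qa hx)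
  have hqban : (qa, b) ∉ R.arcs := fun hx => hqanepb (hinb qa hx)
  have hqbbn : (qb, b) ∉ R.arcs := fun hx => hqbpb' (hinb qb hx)
  obtain ⟨ρ, ⟨hρv, hρ0⟩, hρu⟩ := hRootU
  have hrootid : ∀ v ∈ R.verts, R.inDeg v = 0 → v = ρ := fun v hv h0 => hρu v ⟨hv, h0⟩
  have hρpa : ρ ≠ pa := by rintro rfl; omega
  have hρpb : ρ ≠ pb := by rintro rfl; omega
  have hMmem : ∀ v, v ∈ M.verts ↔ v ∈ R.verts ∧ v ≠ pa ∧ v ≠ pb := by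
    intro v
    rw [hMV, Finset.mem_sdiff]
    simp only [Finset.mem_insert, Finset.mem_singleton]
    tauto
  have hIn : ∀ v, v ≠ pa → v ≠ pb → M.inDeg v = R.inDeg v := by
    intro v hvpa hvpb
    show (M.arcs.filter (fun q => q.2 = v)).card = (R.arcs.filter (fun q => q.2 = v)).card
    by_cases hva : v = a
    · rw [hva, hMA,
        filter_one_swap Prod.snd (show ((qa, a) : ℕ × ℕ).2 = a from rfl) (Ne.symm hab) (filter_in_eq hina1 hpaa) (by simp),
        filter_in_eq hina1 hpaa]
      simp
    · by_cases hvb : v = b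
      · rw [hvb, hMA, Finset.insert_comm,
          filter_one_swap Prod.snd (show ((qb, b) : ℕ × ℕ).2 = b from rfl) hab (filter_in_eq hinb1 hpbb) (by simp),
          filter_in_eq hinb1 hpbb]
        simp
      · rw [hMA, filter_untouched Prod.snd (Ne.symm hva) (Ne.symm hvb) ?_]
        intro r hr
        simp only [Finset.mem_insert, Finset.mem_singleton] at hr
        rcases hr with rfl | rfl | rfl | rfl | rfl
        exacts [Ne.symm hvpa, Ne.symm hva, Ne.symm hvpa, Ne.symm hvb, Ne.symm hvpb]
  have hOut : ∀ v, v ≠ pa → v ≠ pb → M.outDeg v = R.outDeg v := by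
    intro v hvpa hvpb
    show (M.arcs.filter (fun q => q.1 = v)).card = (R.arcs.filter (fun q => q.1 = v)).card
    by_cases hvqa : v = qa
    · by_cases hvqb : v = qb
      · have hqq : (qb, b).1 = qa := by rw [← hvqb, hvqa]
        rw [hvqa, hMA, filter_two_swap Prod.fst (show ((qa, a) : ℕ × ℕ).1 = qa from rfl) hqq (by simp : ((qa, pa) : ℕ × ℕ) ∈ ({(pb, pa), (pa, a), (qa, pa), (pb, b), (qb, pb)} : Finset (ℕ × ℕ)))
            (by simp : ((qb, pb) : ℕ × ℕ) ∈ ({(pb, pa), (pa, a), (qa, pa), (pb, b), (qb, pb)} : Finset (ℕ × ℕ))) ?_,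
          card_insert2_sdiff_pair' (s := R.arcs.filter (fun q => q.1 = qa))
            (fun h => hqaan (Finset.mem_filter.1 h).1)
            (fun h => hqbbn (Finset.mem_filter.1 h).1)
            (fun h => hab (congrArg Prod.snd h))
            (show ((qa, pa) : ℕ × ℕ) ∈ R.arcs.filter (fun q => q.1 = qa) from
              Finset.mem_filter.2 ⟨hqapa, rfl⟩)
            (show ((qb, pb) : ℕ × ℕ) ∈ R.arcs.filter (fun q => q.1 = qa) from
              Finset.mem_filter.2 ⟨hqbpb, hqq⟩)
            (fun h => hpbpa' (congrArg Prod.snd h).symm)]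
        intro s hs hne1 hne2
        simp only [Finset.mem_insert, Finset.mem_singleton] at hs
        rcases hs with rfl | rfl | rfl | rfl | rfl
        exacts [Ne.symm hqanepb, Ne.symm hqapa', absurd rfl hne1, Ne.symm hqanepb,
          absurd rfl hne2]
      · have hqbne : (qb, b).1 ≠ qa := fun h => hvqb (hvqa.trans h.symm)
        rw [hvqa, hMA, filter_out_swap Prod.fst (show ((qa, a) : ℕ × ℕ).1 = qa from rfl) hqbne
            (by simp : ((qa, pa) : ℕ × ℕ) ∈ ({(pb, pa), (pa, a), (qa, pa), (pb, b), (qb, pb)} : Finset (ℕ × ℕ))) ?_,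
          card_insert_sdiff_singleton' (s := R.arcs.filter (fun q => q.1 = qa))
            (fun h => hqaan (Finset.mem_filter.1 h).1)
            (show ((qa, pa) : ℕ × ℕ) ∈ R.arcs.filter (fun q => q.1 = qa) from
              Finset.mem_filter.2 ⟨hqapa, rfl⟩)]
        intro s hs hne
        simp only [Finset.mem_insert, Finset.mem_singleton] at hs
        rcases hs with rfl | rfl | rfl | rfl | rfl
        exacts [Ne.symm hqanepb, Ne.symm hqapa', absurd rfl hne, Ne.symm hqanepb, hqbne]
    · by_cases hvqb : v = qb
      · have hqane : (qa, a).1 ≠ qb := fun h => hvqa (hvqb.trans h.symm)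
        rw [hvqb, hMA, Finset.insert_comm, filter_out_swap Prod.fst (show ((qb, b) : ℕ × ℕ).1 = qb from rfl) hqane
            (by simp : ((qb, pb) : ℕ × ℕ) ∈ ({(pb, pa), (pa, a), (qa, pa), (pb, b), (qb, pb)} : Finset (ℕ × ℕ))) ?_,
          card_insert_sdiff_singleton' (s := R.arcs.filter (fun q => q.1 = qb))
            (fun h => hqbbn (Finset.mem_filter.1 h).1)
            (show ((qb, pb) : ℕ × ℕ) ∈ R.arcs.filter (fun q => q.1 = qb) from
              Finset.mem_filter.2 ⟨hqbpb, rfl⟩)]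
        intro s hs hne
        simp only [Finset.mem_insert, Finset.mem_singleton] at hs
        rcases hs with rfl | rfl | rfl | rfl | rfl
        exacts [Ne.symm hqbpb', Ne.symm hqbpa, hqane, Ne.symm hqbpb',
          absurd rfl hne]
      · rw [hMA, filter_untouched Prod.fst (Ne.symm hvqa) (Ne.symm hvqb) ?_]
        intro r hr
        simp only [Finset.mem_insert, Finset.mem_singleton] at hr
        rcases hr with rfl | rfl | rfl | rfl | rfl
        exacts [Ne.symm hvpb, Ne.symm hvpa, Ne.symm hvqa, Ne.symm hvpb, Ne.symm hvqb]
  refine ⟨?_, ?_⟩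
  · right
    refine ⟨?_, ?_, ?_, ?_, ?_, ?_⟩
    · -- endpoints
      intro q hq
      rw [hMA] at hq
      rcases Finset.mem_insert.1 hq with rfl | hq1
      · exact ⟨(hMmem qa).2 ⟨hqav, hqapa', hqanepb⟩,
          (hMmem a).2 ⟨hav, Ne.symm hpaa', hapb⟩⟩
      rcases Finset.mem_insert.1 hq1 with rfl | hq2
      · exact ⟨(hMmem qb).2 ⟨hqbv, hqbpa, hqbpb'⟩,
          (hMmem b).2 ⟨hbv, hbpa, Ne.symm hpbb'⟩⟩
      obtain ⟨h1, h2⟩ := Finset.mem_sdiff.1 hq2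
      obtain ⟨x, y⟩ := q
      simp only [Finset.mem_insert, Finset.mem_singleton, Prod.mk.injEq] at h2
      have hxpa : x ≠ pa := by
        rintro rfl
        have := houtpa y h1
        omega
      have hxpb : x ≠ pb := by
        rintro rfl
        rcases houtpb y h1 with rfl | rfl <;> omega
      have hypa : y ≠ pa := by
        rintro rfl
        rcases hinpa x h1 with rfl | rfl <;> omega
      have hypb : y ≠ pb := by
        rintro rfl
        have := hinpb x h1
        omega
      exact ⟨(hMmem x).2 ⟨(hEnds _ h1).1, hxpa, hxpb⟩,
        (hMmem y).2 ⟨(hEnds _ h1).2, hypa, hypb⟩⟩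
    · -- no loops
      intro q hq
      rw [hMA] at hq
      rcases Finset.mem_insert.1 hq with rfl | hq1
      · exact hqaa
      rcases Finset.mem_insert.1 hq1 with rfl | hq2
      · exact hqbb
      · exact hLoop _ (Finset.mem_sdiff.1 hq2).1
    · -- acyclic
      refine acyclic_of_sub ?_ hAcy
      intro u v hq
      have hq' : (u, v) ∈ M.arcs := hq
      rw [hMA] at hq'
      rcases Finset.mem_insert.1 hq' with heq | hq1
      · cases heq
        exact Relation.TransGen.head hqapa (Relation.TransGen.single hpaa)
      rcases Finset.mem_insert.1 hq1 with heq | hq2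
      · cases heq
        exact Relation.TransGen.head hqbpb (Relation.TransGen.single hpbb)
      · exact Relation.TransGen.single (Finset.mem_sdiff.1 hq2).1
    · -- unique root
      refine ⟨ρ, ⟨(hMmem ρ).2 ⟨hρv, hρpa, hρpb⟩, by rw [hIn ρ hρpa hρpb]; exact hρ0⟩, ?_⟩
      rintro v ⟨hv1, hv2⟩
      obtain ⟨hv1, hvpa, hvpb⟩ := (hMmem v).1 hv1
      rw [hIn v hvpa hvpb] at hv2
      exact hrootid v hv1 hv2
    · -- vertex classification
      intro v hv
      obtain ⟨hv1, hvpa, hvpb⟩ := (hMmem v).1 hv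
      rcases hClass v hv1 with ⟨-, h1, h2⟩ | ⟨-, h1, h2⟩ | ⟨-, h1, h2⟩ | ⟨-, h1, h2⟩
      · exact Or.inl ⟨hv, by rw [hIn v hvpa hvpb]; exact h1,
          by rw [hOut v hvpa hvpb]; exact h2⟩
      · exact Or.inr (Or.inl ⟨hv, by rw [hIn v hvpa hvpb]; exact h1,
          by rw [hOut v hvpa hvpb]; exact h2⟩)
      · exact Or.inr (Or.inr (Or.inl ⟨hv, by rw [hIn v hvpa hvpb]; exact h1,
          by rw [hOut v hvpa hvpb]; exact h2⟩))
      · exact Or.inr (Or.inr (Or.inr ⟨hv, by rw [hIn v hvpa hvpb]; exact h1,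
          by rw [hOut v hvpa hvpb]; exact h2⟩))
    · -- leaves
      intro v
      constructor
      · rintro ⟨hv1, h1, h2⟩
        obtain ⟨hv1, hvpa, hvpb⟩ := (hMmem v).1 hv1
        rw [hIn v hvpa hvpb] at h1
        rw [hOut v hvpa hvpb] at h2
        exact (hLeafX v).1 ⟨hv1, h1, h2⟩
      · intro hv
        obtain ⟨hv1, h1, h2⟩ := (hLeafX v).2 hv
        have hvpa : v ≠ pa := by rintro rfl; omega
        have hvpb : v ≠ pb := by rintro rfl; omega
        exact ⟨(hMmem v).2 ⟨hv1, hvpa, hvpb⟩, by rw [hIn v hvpa hvpb]; exact h1,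
          by rw [hOut v hvpa hvpb]; exact h2⟩
  · intro pd hpd
    have h1 := hinb pd hpd
    rw [h1]
    exact hTpb

/-- A cherry reduction applied to a rooted binary phylogenetic network yields
a rooted binary phylogenetic network; in particular, the parent of the non-reticulation
leaf of a reticulated cherry is a tree vertex. -/
theorem rooted_cherry_reduction_closed (R M : DNet) (X : Finset ℕ) (a b c d : ℕ)
    (hR : IsRootedBinaryNet R X) :
    (RReduceCherry R M a b → IsRootedBinaryNet M (X.erase a)) ∧
    (RReduceRetCherry R M c d →
      IsRootedBinaryNet M X ∧ ∀ pd, (pd, d) ∈ R.arcs → R.IsTreeVertex pd) := by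
  exact ⟨fun h => cherry_closed R M X a b hR h, fun h => ret_closed R M X c d hR h⟩
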